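/- arXiv:2407.12505 — 2 statements merged into one kernel-verified Lean document; each statement's English description precedes it below -/
import Mathlib

section
/- (Equivariance of the local reference frame, Theorem 3.1.) Let g = (0,0,1) ∈ ℝ³ and let u ∈ ℝ³ satisfy u − ⟨u,g⟩g ≠ 0. Define OP(u) as the 3×3 matrix whose columns are e₁(u) = (u − ⟨u,g⟩g)/‖u − ⟨u,g⟩g‖, e₂(u) = e₁(u) × g, and e₃ = g. Then for every real 3×3 matrix O with Oᵀ O = I, det(O) = 1, and O g = g (i.e., O ∈ SO_g(3)), one has OP(O u) = O · OP(u). -/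
open Matrix

/-- The gravity direction `g = (0,0,1)`. -/
noncomputable def gvec : Fin 3 → ℝ := ![0, 0, 1]

/-- Euclidean norm on `ℝ³` (vectors as `Fin 3 → ℝ`). -/
noncomputable def enorm3 (v : Fin 3 → ℝ) : ℝ := Real.sqrt (v ⬝ᵥ v)

/-- `e₁(u) = (u − ⟨u,g⟩g)/‖u − ⟨u,g⟩g‖`, the normalized horizontal component of `u`. -/
noncomputable def e1 (u : Fin 3 → ℝ) : Fin 3 → ℝ :=
  (enorm3 (u - (u ⬝ᵥ gvec) • gvec))⁻¹ • (u - (u ⬝ᵥ gvec) • gvec)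

/-- `e₂(u) = e₁(u) × g`. -/
noncomputable def e2 (u : Fin 3 → ℝ) : Fin 3 → ℝ := e1 u ⨯₃ gvec

/-- `OP(u)` is the 3×3 matrix whose columns are `e₁(u)`, `e₂(u)`, and `g`. -/
noncomputable def OP (u : Fin 3 → ℝ) : Matrix (Fin 3) (Fin 3) ℝ :=
  Matrix.of fun i j => ![e1 u, e2 u, gvec] j i

lemma cross_rot (M : Matrix (Fin 3) (Fin 3) ℝ) (a b : Fin 3 → ℝ) :
    Mᵀ *ᵥ ((M *ᵥ a) ⨯₃ (M *ᵥ b)) = M.det • (a ⨯₃ b) := by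
  funext i
  fin_cases i <;>
    simp [crossProduct, mulVec, dotProduct, det_fin_three, Fin.sum_univ_three] <;> ring

/-- Equivariance of the local reference frame (Theorem 3.1): if `u − ⟨u,g⟩g ≠ 0` and
`O ∈ SO_g(3)` (i.e. `Oᵀ O = 1`, `det O = 1`, `O g = g`), then `OP(O u) = O * OP(u)`. -/
theorem OP_equivariant (u : Fin 3 → ℝ) (hu : u - (u ⬝ᵥ gvec) • gvec ≠ 0)
    (O : Matrix (Fin 3) (Fin 3) ℝ) (hO : Oᵀ * O = 1) (hdet : O.det = 1)
    (hg : O *ᵥ gvec = gvec) :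
    OP (O *ᵥ u) = O * OP u := by
  have hOOt : O * Oᵀ = 1 := mul_eq_one_comm.mp hO
  have hdot : ∀ v w : Fin 3 → ℝ, (O *ᵥ v) ⬝ᵥ (O *ᵥ w) = v ⬝ᵥ w := fun v w => by
    rw [dotProduct_mulVec, ← vecMul_transpose, vecMul_vecMul, hO, vecMul_one]
  have hc : (O *ᵥ u) ⬝ᵥ gvec = u ⬝ᵥ gvec := by
    conv_lhs => rw [← hg]
    exact hdot u gvec
  have hw : (O *ᵥ u) - ((O *ᵥ u) ⬝ᵥ gvec) • gvec = O *ᵥ (u - (u ⬝ᵥ gvec) • gvec) := by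
    rw [hc, mulVec_sub, mulVec_smul, hg]
  have hnorm : ∀ v : Fin 3 → ℝ, enorm3 (O *ᵥ v) = enorm3 v := fun v => by
    unfold enorm3; rw [hdot]
  have he1 : e1 (O *ᵥ u) = O *ᵥ e1 u := by
    unfold e1
    rw [hw, hnorm, mulVec_smul]
  have hcross : ∀ a b : Fin 3 → ℝ, (O *ᵥ a) ⨯₃ (O *ᵥ b) = O *ᵥ (a ⨯₃ b) := fun a b => by
    have h := congrArg (O *ᵥ ·) (cross_rot O a b)
    simpa [mulVec_mulVec, hOOt, hdet] using h
  have he2 : e2 (O *ᵥ u) = O *ᵥ e2 u := by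
    unfold e2
    rw [he1, ← hg, hcross, hg]
  ext i j
  fin_cases j
  · simpa [OP, Matrix.mul_apply, Fin.sum_univ_three, mulVec, dotProduct] using
      congrFun he1 i
  · simpa [OP, Matrix.mul_apply, Fin.sum_univ_three, mulVec, dotProduct] using
      congrFun he2 i
  · simpa [OP, Matrix.mul_apply, Fin.sum_univ_three, mulVec, dotProduct] using
      (congrFun hg i).symm
end

section
/- (Subequivariance of the scalarization-based function f_g, Eq. (8).) Fix g ∈ ℝ³, m, d ∈ ℕ, and an arbitrary function σ from pairs (an (m+1)×(m+1) real matrix, a vector in ℝ^d) to (m+1)×m real matrices. For a real 3×m matrix Z and h ∈ ℝ^d, define f_g(Z, h) = [Z, g] · σ([Z, g]ᵀ [Z, g], h), where [Z, g] is the 3×(m+1) matrix obtained by appending g as a last column to Z. Then for every real 3×3 matrix O with Oᵀ O = I and O g = g, one has f_g(O Z, h) = O · f_g(Z, h); i.e., f_g is O_g(3)-equivariant in its vector argument. -/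
open Matrix

/-- `appendCol Z g` is the 3×(m+1) matrix `[Z, g]` whose first `m` columns are the columns
of `Z` and whose last column is the vector `g`. -/
def appendCol {m : ℕ} (Z : Matrix (Fin 3) (Fin m) ℝ) (g : Fin 3 → ℝ) :
    Matrix (Fin 3) (Fin (m + 1)) ℝ :=
  Matrix.of fun i => Fin.snoc (Z i) (g i)

/-- The scalarization-based function `f_g(Z, h) = [Z, g] · σ([Z, g]ᵀ [Z, g], h)`,
where `σ` is an arbitrary function (modeling an MLP). -/
def fg {m d : ℕ} (g : Fin 3 → ℝ)
    (σ : Matrix (Fin (m + 1)) (Fin (m + 1)) ℝ → (Fin d → ℝ) → Matrix (Fin (m + 1)) (Fin m) ℝ)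
    (Z : Matrix (Fin 3) (Fin m) ℝ) (h : Fin d → ℝ) : Matrix (Fin 3) (Fin m) ℝ :=
  appendCol Z g * σ ((appendCol Z g)ᵀ * appendCol Z g) h

/-- Subequivariance of the scalarization-based function `f_g` (Eq. (8)): for every
orthogonal `O` fixing `g`, `f_g(O Z, h) = O · f_g(Z, h)`. -/
theorem fg_subequivariant (g : Fin 3 → ℝ) (m d : ℕ)
    (σ : Matrix (Fin (m + 1)) (Fin (m + 1)) ℝ → (Fin d → ℝ) → Matrix (Fin (m + 1)) (Fin m) ℝ)
    (Z : Matrix (Fin 3) (Fin m) ℝ) (h : Fin d → ℝ)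
    (O : Matrix (Fin 3) (Fin 3) ℝ) (hO : Oᵀ * O = 1) (hg : O *ᵥ g = g) :
    fg g σ (O * Z) h = O * fg g σ Z h := by
  have key : appendCol (O * Z) g = O * appendCol Z g := by
    ext i j
    refine Fin.lastCases ?_ ?_ j
    · simp only [appendCol, Matrix.of_apply, Fin.snoc_last, Matrix.mul_apply]
      conv_lhs => rw [← hg]
      simp [Matrix.mulVec, dotProduct]
    · intro j
      simp [appendCol, Matrix.mul_apply]
  have hgram : (O * appendCol Z g)ᵀ * (O * appendCol Z g)
      = (appendCol Z g)ᵀ * appendCol Z g := by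
    rw [Matrix.transpose_mul, Matrix.mul_assoc, ← Matrix.mul_assoc Oᵀ, hO, Matrix.one_mul]
  rw [fg, fg, key, hgram, Matrix.mul_assoc]
end
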